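/- Let k≥3 be an integer. Then for every n∈ℕ: (i) f_{i,j}(n) + 1 = f_{i,j−1}(n) for all integers i,j with k−3≤i≤k−2 and 2−F(k)≤j≤−F(i+1); (ii) f_{k−3,1−F(k)}(a(n)) + 1 = f_{k−2,−F(k−1)}(n); (iii) f_{k−3,1−F(k)}(b(n)) + 1 = f_{k−3,−F(k−2)}(b(n)+1); (iv) f_{k−2,1−F(k)}(n) + 1 = f_{k−3,−F(k−2)}(a(n)+1). -/

import Mathlib

/-- The golden ratio φ = (1 + √5)/2. -/
noncomputable def phi : ℝ := (1 + Real.sqrt 5) / 2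

/-- The lower Wythoff sequence a(n) = ⌊nφ⌋. -/
noncomputable def wa (n : ℕ) : ℕ := ⌊(n : ℝ) * phi⌋₊

/-- The upper Wythoff sequence b(n) = ⌊nφ²⌋. -/
noncomputable def wb (n : ℕ) : ℕ := ⌊(n : ℝ) * phi ^ 2⌋₊

/-- f_{i,j}(n) = F(i+1)·a(n) + F(i)·n − j. -/
noncomputable def fij (i : ℕ) (j : ℤ) (n : ℕ) : ℤ :=
  (Nat.fib (i + 1) : ℤ) * wa n + (Nat.fib i : ℤ) * n - j

/-! Once `a(a(n)) = a(n) + n - 1` (for `n ≥ 1`), `a(a(n) + 1) = a(n) + n + 1`, `a(b(n)) = 2a(n) + n`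
and `a(b(n) + 1) = 2a(n) + n + 1` are known, parts (ii)–(iv) are linear identities in `a(n)`, `n`
and Fibonacci numbers. The four compositions come from `φ² = φ + 1`: with `ε = nφ - a(n) ∈ [0, 1)`
one has `a(n)·φ = a(n) + n - ε(φ - 1)` and `b(n) = a(n) + n`, and `0 ≤ ε(φ - 1) < 1` pins down
each floor; for `a(a(n))` the irrationality of `φ` gives `ε > 0`. -/

open Real

lemma phi_sq : phi ^ 2 = phi + 1 := goldenRatio_sq

lemma phi_pos : 0 < phi := goldenRatio_pos

lemma one_lt_phi : 1 < phi := one_lt_goldenRatio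

lemma phi_lt_two : phi < 2 := goldenRatio_lt_two

lemma wa_le_mul_phi (n : ℕ) : (wa n : ℝ) ≤ n * phi :=
  Nat.floor_le (mul_nonneg n.cast_nonneg phi_pos.le)

lemma mul_phi_lt_wa_add_one (n : ℕ) : (n : ℝ) * phi < wa n + 1 :=
  Nat.lt_floor_add_one _

lemma wa_lt_mul_phi {n : ℕ} (hn : n ≠ 0) : (wa n : ℝ) < n * phi :=
  (wa_le_mul_phi n).lt_of_ne fun h ↦
    (goldenRatio_irrational.natCast_mul hn).ne_nat (wa n) h.symm

lemma wa_eq_of_le_of_lt {n m : ℕ} (h₁ : (m : ℝ) ≤ n * phi) (h₂ : (n : ℝ) * phi < m + 1) :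
    wa n = m :=
  (Nat.floor_eq_iff (mul_nonneg n.cast_nonneg phi_pos.le)).2 ⟨h₁, h₂⟩

lemma wb_eq_wa_add (n : ℕ) : wb n = wa n + n := by
  rw [wb, phi_sq, mul_add, mul_one,
    Nat.floor_add_natCast (mul_nonneg n.cast_nonneg phi_pos.le), wa]

lemma wa_mul_phi (n : ℕ) : (wa n : ℝ) * phi = wa n + n - (n * phi - wa n) * (phi - 1) := by
  linear_combination (n : ℝ) * phi_sq

lemma wa_wa {n : ℕ} (hn : n ≠ 0) : wa (wa n) + 1 = wa n + n := by
  obtain ⟨m, hm⟩ : ∃ m, wa n + n = m + 1 := ⟨wa n + n - 1, by omega⟩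
  have hm' : (wa n : ℝ) + n = m + 1 := by exact_mod_cast hm
  rw [wa_eq_of_le_of_lt (m := m)] <;>
    nlinarith [wa_mul_phi n, wa_lt_mul_phi hn, mul_phi_lt_wa_add_one n, one_lt_phi, phi_lt_two]

lemma wa_wa_add_one (n : ℕ) : wa (wa n + 1) = wa n + n + 1 := by
  apply wa_eq_of_le_of_lt <;> push_cast <;>
    nlinarith [wa_mul_phi n, wa_le_mul_phi n, mul_phi_lt_wa_add_one n, one_lt_phi, phi_lt_two]

lemma wa_wb (n : ℕ) : wa (wb n) = 2 * wa n + n := by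
  rw [wb_eq_wa_add]
  apply wa_eq_of_le_of_lt <;> push_cast <;>
    nlinarith [wa_mul_phi n, wa_le_mul_phi n, mul_phi_lt_wa_add_one n, one_lt_phi, phi_lt_two]

lemma wa_wb_add_one (n : ℕ) : wa (wb n + 1) = 2 * wa n + n + 1 := by
  rw [wb_eq_wa_add]
  apply wa_eq_of_le_of_lt <;> push_cast <;>
    nlinarith [wa_mul_phi n, wa_le_mul_phi n, mul_phi_lt_wa_add_one n, one_lt_phi, phi_lt_two]

lemma fij_add_one (i : ℕ) (j : ℤ) (n : ℕ) : fij i j n + 1 = fij i (j - 1) n := by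
  unfold fij; ring

lemma fij_wa {n : ℕ} (m : ℕ) (hn : n ≠ 0) :
    fij m (1 - Nat.fib (m + 3)) (wa n) + 1 = fij (m + 1) (-Nat.fib (m + 2)) n := by
  have h : (wa (wa n) : ℤ) = wa n + n - 1 := by have := wa_wa hn; omega
  unfold fij
  rw [h]
  push_cast [Nat.fib_add_two]
  ring

lemma fij_wb (m n : ℕ) :
    fij m (1 - Nat.fib (m + 3)) (wb n) + 1 = fij m (-Nat.fib (m + 1)) (wb n + 1) := by
  unfold fij
  rw [wa_wb_add_one, wa_wb, wb_eq_wa_add]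
  push_cast [Nat.fib_add_two]
  ring

lemma fij_wa_add_one (m n : ℕ) :
    fij (m + 1) (1 - Nat.fib (m + 3)) n + 1 = fij m (-Nat.fib (m + 1)) (wa n + 1) := by
  unfold fij
  rw [wa_wa_add_one]
  push_cast [Nat.fib_add_two]
  ring

theorem stmt_5 (k : ℕ) (hk : 3 ≤ k) (n : ℕ) (hn : 0 < n) :
    (∀ i : ℕ, ∀ j : ℤ, k - 3 ≤ i → i ≤ k - 2 →
      2 - (Nat.fib k : ℤ) ≤ j → j ≤ -(Nat.fib (i + 1) : ℤ) →
      fij i j n + 1 = fij i (j - 1) n) ∧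
    fij (k - 3) (1 - (Nat.fib k : ℤ)) (wa n) + 1 = fij (k - 2) (-(Nat.fib (k - 1) : ℤ)) n ∧
    fij (k - 3) (1 - (Nat.fib k : ℤ)) (wb n) + 1 =
      fij (k - 3) (-(Nat.fib (k - 2) : ℤ)) (wb n + 1) ∧
    fij (k - 2) (1 - (Nat.fib k : ℤ)) n + 1 =
      fij (k - 3) (-(Nat.fib (k - 2) : ℤ)) (wa n + 1) := by
  obtain ⟨m, rfl⟩ : ∃ m, k = m + 3 := ⟨k - 3, by omega⟩
  rw [show m + 3 - 3 = m by omega, show m + 3 - 2 = m + 1 by omega,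
    show m + 3 - 1 = m + 2 by omega]
  exact ⟨fun i j _ _ _ _ ↦ fij_add_one i j n, fij_wa m hn.ne', fij_wb m n, fij_wa_add_one m n⟩
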